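/- For every non-negative integer n, the integral over [-1,1] of sqrt(1 - z^2) * P_{2n}(z) with respect to z equals (π * (-1)^n / 4^n) * Σ_{k=0}^{n} C(2n, n-k) * C(2n+2k, 2n) * C(1/2, k+1), where C(1/2, j) denotes the generalized binomial coefficient (1/2)(1/2 - 1)···(1/2 - j + 1)/j!. -/

import Mathlib

/-- Generalized binomial coefficient `C(r, j) = r(r-1)⋯(r-j+1)/j!`. -/
noncomputable def genChoose (r : ℝ) (j : ℕ) : ℝ :=
  (∏ i ∈ Finset.range j, (r - i)) / (Nat.factorial j)

/-- The `n`-th Legendre polynomial via the Rodrigues formula,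
normalized so that `legendre n` evaluates to `1` at `1`. -/
noncomputable def legendre (n : ℕ) : Polynomial ℝ :=
  Polynomial.C (1 / (2 ^ n * (Nat.factorial n) : ℝ)) *
    Polynomial.derivative^[n] ((Polynomial.X ^ 2 - 1) ^ n)

/-!
Rodrigues' formula expands `P_{2n}` into even powers only: the coefficient of `z ^ (2k)` is
`(-1)^(n+k) 4^(-n) C(2n, n-k) C(2n+2k, 2n)`, the lower powers of `(z² - 1)^(2n)` being killed by
the `2n`-th derivative. The substitution `z = sin x` turns the moment `∫ √(1 - z²) z^(2k)` into
the difference of two consecutive Wallis integrals, which equals `π (-1)^k C(1/2, k+1)`.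
-/

open Real Finset Polynomial MeasureTheory intervalIntegral

lemma genChoose_zero (r : ℝ) : genChoose r 0 = 1 := by
  simp [genChoose]

lemma genChoose_succ (r : ℝ) (j : ℕ) :
    genChoose r (j + 1) = genChoose r j * (r - j) / (j + 1) := by
  rw [genChoose, genChoose, prod_range_succ, Nat.factorial_succ]
  push_cast
  field_simp

lemma genChoose_half_succ (k : ℕ) :
    genChoose (1 / 2) (k + 1) =
      (-1) ^ k * (∏ i ∈ range k, (2 * (i : ℝ) + 1) / (2 * i + 2)) / (2 * k + 2) := by
  induction k with
  | zero => simp [genChoose_succ, genChoose_zero]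
  | succ k ih =>
    rw [genChoose_succ, ih, prod_range_succ]
    push_cast
    field_simp
    ring

lemma integral_sin_pow_even_neg_pi_div_two (m : ℕ) :
    ∫ x in -(π / 2)..π / 2, sin x ^ (2 * m) =
      π * ∏ i ∈ range m, (2 * (i : ℝ) + 1) / (2 * i + 2) := by
  have hper : Function.Periodic (fun x ↦ sin x ^ (2 * m)) π := fun x ↦ by
    simp only [sin_add_pi, (even_two_mul m).neg_pow]
  have h := hper.intervalIntegral_add_eq (-(π / 2)) 0
  rw [neg_add_eq_sub, sub_half, zero_add] at h
  rw [h, integral_sin_pow_even]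

lemma integral_sqrt_one_sub_sq_mul (f : ℝ → ℝ) (hf : Continuous f) :
    ∫ z in (-1 : ℝ)..1, √(1 - z ^ 2) * f z =
      ∫ x in -(π / 2)..π / 2, cos x ^ 2 * f (sin x) :=
  calc
    _ = ∫ z in sin (-(π / 2))..sin (π / 2), √(1 - z ^ 2) * f z := by
      rw [sin_neg, sin_pi_div_two]
    _ = ∫ x in -(π / 2)..π / 2, (√(1 - sin x ^ 2) * f (sin x)) * cos x :=
      (integral_comp_mul_deriv (fun x _ ↦ hasDerivAt_sin x) continuousOn_cos
        (by fun_prop)).symm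
    _ = ∫ x in -(π / 2)..π / 2, cos x ^ 2 * f (sin x) := by
      refine integral_congr_ae (ae_of_all _ fun x hx ↦ ?_)
      rw [Set.uIoc_of_le (neg_le_self (half_pos pi_pos).le), Set.mem_Ioc] at hx
      rw [← cos_eq_sqrt_one_sub_sin_sq hx.1.le hx.2]
      ring

lemma integral_sqrt_one_sub_sq_mul_pow_even (k : ℕ) :
    ∫ z in (-1 : ℝ)..1, √(1 - z ^ 2) * z ^ (2 * k) =
      π * (-1) ^ k * genChoose (1 / 2) (k + 1) := by
  have hintegrable (j : ℕ) : IntervalIntegrable (fun x ↦ sin x ^ j) volume (-(π / 2)) (π / 2) :=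
    (continuous_sin.pow j).intervalIntegrable _ _
  rw [integral_sqrt_one_sub_sq_mul _ (continuous_pow _)]
  simp only [cos_sq', sub_mul, one_mul, ← pow_add]
  rw [integral_sub (hintegrable _) (hintegrable _), show 2 + 2 * k = 2 * (k + 1) by ring,
    integral_sin_pow_even_neg_pi_div_two, integral_sin_pow_even_neg_pi_div_two,
    prod_range_succ, genChoose_half_succ]
  have hsq : ((-1 : ℝ) ^ k) ^ 2 = 1 := by rw [← pow_mul', (even_two_mul k).neg_one_pow]
  field_simp
  linear_combination -hsq

lemma iterate_derivative_X_sq_sub_one_pow {R : Type*} [CommRing R] (m : ℕ) :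
    derivative^[m] ((X ^ 2 - 1 : R[X]) ^ m) =
      ∑ j ∈ range (m + 1),
        C ((-1) ^ (j + m) * m.choose j * (2 * j).descFactorial m : R) * X ^ (2 * j - m) := by
  rw [sub_pow, iterate_derivative_sum]
  refine sum_congr rfl fun j _ ↦ ?_
  rw [← pow_mul, one_pow, mul_one,
    show (-1) ^ (j + m) * (X : R[X]) ^ (2 * j) * (m.choose j : R[X]) =
      C ((-1) ^ (j + m) * m.choose j : R) * X ^ (2 * j) by simp; ring,
    iterate_derivative_C_mul, iterate_derivative_X_pow_eq_C_mul, ← mul_assoc, ← C_mul]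

lemma legendre_two_mul_eval (n : ℕ) (z : ℝ) :
    (legendre (2 * n)).eval z = (-1) ^ n / 4 ^ n * ∑ k ∈ range (n + 1),
      (-1) ^ k * ((2 * n).choose (n - k) : ℝ) * ((2 * n + 2 * k).choose (2 * n) : ℝ) *
        z ^ (2 * k) := by
  have hlow : ∀ j < n, (2 * j).descFactorial (2 * n) = 0 := fun j hj ↦
    Nat.descFactorial_eq_zero_iff_lt.mpr (by omega)
  rw [legendre, eval_mul, eval_C, iterate_derivative_X_sq_sub_one_pow, eval_finsetSum,
    show 2 * n + 1 = n + (n + 1) by ring, sum_range_add,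
    sum_eq_zero fun j hj ↦ by simp [hlow j (mem_range.mp hj)], zero_add, mul_sum, mul_sum]
  refine sum_congr rfl fun k hk ↦ ?_
  have hkn : k ≤ n := Nat.lt_succ_iff.mp (mem_range.mp hk)
  have hchoose : (2 * n).choose (n + k) = (2 * n).choose (n - k) :=
    Nat.choose_symm_of_eq_add (by omega)
  rw [eval_mul, eval_C, eval_pow, eval_X, hchoose, show 2 * (n + k) = 2 * n + 2 * k by ring,
    Nat.descFactorial_eq_factorial_mul_choose, show 2 * n + 2 * k - 2 * n = 2 * k by omega,
    pow_add, pow_add, (even_two_mul n).neg_one_pow, mul_one, pow_mul,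
    show (2 : ℝ) ^ 2 = 4 by norm_num]
  push_cast
  field_simp

theorem stmt_2 (n : ℕ) :
    ∫ z in (-1:ℝ)..1, Real.sqrt (1 - z ^ 2) * (legendre (2 * n)).eval z
      = (Real.pi * (-1) ^ n / 4 ^ n) *
        ∑ k ∈ Finset.range (n + 1),
          (Nat.choose (2 * n) (n - k) : ℝ) * (Nat.choose (2 * n + 2 * k) (2 * n) : ℝ) *
            genChoose (1 / 2) (k + 1) := by
  set c : ℕ → ℝ := fun k ↦ ((2 * n).choose (n - k) : ℝ) * (2 * n + 2 * k).choose (2 * n)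
  have hintegrable (k : ℕ) :
      IntervalIntegrable (fun z ↦ √(1 - z ^ 2) * z ^ (2 * k)) volume (-1) 1 :=
    (by fun_prop : Continuous _).intervalIntegrable _ _
  calc
    _ = ∫ z in (-1 : ℝ)..1, ∑ k ∈ range (n + 1),
          (-1) ^ n / 4 ^ n * (-1) ^ k * c k * (√(1 - z ^ 2) * z ^ (2 * k)) := by
      refine integral_congr fun z _ ↦ ?_
      simp only [legendre_two_mul_eval, mul_sum]
      exact sum_congr rfl fun k _ ↦ by ring
    _ = ∑ k ∈ range (n + 1),
          (-1) ^ n / 4 ^ n * (-1) ^ k * c k * (π * (-1) ^ k * genChoose (1 / 2) (k + 1)) := by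
      rw [integral_finsetSum fun k _ ↦ (hintegrable k).const_mul _]
      simp only [intervalIntegral.integral_const_mul, integral_sqrt_one_sub_sq_mul_pow_even]
    _ = _ := by
      rw [mul_sum]
      refine sum_congr rfl fun k _ ↦ ?_
      have hsq : (-1 : ℝ) ^ k * (-1) ^ k = 1 := by
        rw [← pow_add, ← two_mul, (even_two_mul k).neg_one_pow]
      linear_combination (π * (-1) ^ n / 4 ^ n * c k * genChoose (1 / 2) (k + 1)) * hsq
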